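/- Let G be a group and let ḡ ∈ G^n, ḡ' ∈ G^{n'} be tuples. Then the concatenation ḡ·ḡ' is braid-equivalent to ((ḡ')^{πḡ})·ḡ and also braid-equivalent to ḡ'·(ḡ^{(πḡ')^{−1}}). -/

import Mathlib

/-!
A single Hurwitz move carries an entry `a` one step to the right while conjugating the entry it
passes by `a`; iterating, `a :: l` is braid-equivalent to `lᵃ ++ [a]`, and moving the entries of
`ḡ` across `ḡ'` one at a time, from the last to the first, gives `ḡ ++ ḡ' ∼ ḡ'^{πḡ} ++ ḡ`.
The second equivalence is the first one applied to `ḡ'` and `ḡ^{(πḡ')⁻¹}`, read backwards.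
-/

/-- One Hurwitz braid move: replace adjacent entries `a, b` by `a*b*a⁻¹, a`. -/
inductive BraidMove (G : Type*) [Group G] : List G → List G → Prop
  | mk (l₁ l₂ : List G) (a b : G) :
      BraidMove G (l₁ ++ a :: b :: l₂) (l₁ ++ (a * b * a⁻¹) :: a :: l₂)

/-- Braid equivalence of tuples: the equivalence relation generated by Hurwitz moves. -/
def BraidEquiv (G : Type*) [Group G] : List G → List G → Prop :=
  Relation.EqvGen (BraidMove G)

/-- Componentwise conjugation of a tuple: `ḡ^h = (h g₁ h⁻¹, …, h gₙ h⁻¹)`. -/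
def conjList {G : Type*} [Group G] (h : G) (l : List G) : List G :=
  l.map fun x => h * x * h⁻¹

section

variable {G : Type*} [Group G]

@[simp]
theorem conjList_one (l : List G) : conjList 1 l = l := by
  simp [conjList]

theorem conjList_conjList (h₁ h₂ : G) (l : List G) :
    conjList h₁ (conjList h₂ l) = conjList (h₁ * h₂) l := by
  simp [conjList, mul_assoc]

theorem BraidMove.append_append {t t' : List G} (h : BraidMove G t t') (l₁ l₂ : List G) :
    BraidMove G (l₁ ++ t ++ l₂) (l₁ ++ t' ++ l₂) := by
  obtain ⟨m₁, m₂, a, b⟩ := h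
  simpa using BraidMove.mk (l₁ ++ m₁) (m₂ ++ l₂) a b

namespace BraidEquiv

theorem of_move {t t' : List G} (h : BraidMove G t t') : BraidEquiv G t t' :=
  .rel _ _ h

theorem refl (t : List G) : BraidEquiv G t t :=
  Relation.EqvGen.refl t

theorem symm {t t' : List G} (h : BraidEquiv G t t') : BraidEquiv G t' t :=
  Relation.EqvGen.symm _ _ h

theorem trans {t t' t'' : List G} (h : BraidEquiv G t t') (h' : BraidEquiv G t' t'') :
    BraidEquiv G t t'' :=
  Relation.EqvGen.trans _ _ _ h h'

instance : Trans (BraidEquiv G) (BraidEquiv G) (BraidEquiv G) := ⟨trans⟩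

theorem append_append {t t' : List G} (h : BraidEquiv G t t') (l₁ l₂ : List G) :
    BraidEquiv G (l₁ ++ t ++ l₂) (l₁ ++ t' ++ l₂) := by
  induction h with
  | rel _ _ h => exact of_move (h.append_append l₁ l₂)
  | refl => exact refl _
  | symm _ _ _ ih => exact ih.symm
  | trans _ _ _ _ _ ih ih' => exact ih.trans ih'

theorem cons_conjList (a : G) (l : List G) :
    BraidEquiv G (a :: l) (conjList a l ++ [a]) := by
  induction l with
  | nil => exact refl _
  | cons b l ih =>
    calc BraidEquiv G (a :: b :: l) ((a * b * a⁻¹) :: a :: l) := of_move (.mk [] l a b)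
      _ = [a * b * a⁻¹] ++ (a :: l) ++ [] := by simp
      BraidEquiv G _ ([a * b * a⁻¹] ++ (conjList a l ++ [a]) ++ []) := ih.append_append _ _
      _ = conjList a (b :: l) ++ [a] := by simp [conjList]

theorem append_conjList (g g' : List G) :
    BraidEquiv G (g ++ g') (conjList g.prod g' ++ g) := by
  induction g with
  | nil => simpa using refl g'
  | cons a g ih =>
    calc a :: g ++ g' = [a] ++ (g ++ g') ++ [] := by simp
      BraidEquiv G _ ([a] ++ (conjList g.prod g' ++ g) ++ []) := ih.append_append _ _
      _ = [] ++ (a :: conjList g.prod g') ++ g := by simp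
      BraidEquiv G _ ([] ++ (conjList a (conjList g.prod g') ++ [a]) ++ g) :=
          (cons_conjList _ _).append_append _ _
      _ = conjList (a :: g).prod g' ++ a :: g := by simp [conjList_conjList]

end BraidEquiv

end

/-- is braid-equivalent to  and to . -/
theorem braidEquiv_append_comm_conj {G : Type*} [Group G] (g g' : List G) :
    BraidEquiv G (g ++ g') (conjList g.prod g' ++ g) ∧
      BraidEquiv G (g ++ g') (g' ++ conjList g'.prod⁻¹ g) := by
  refine ⟨BraidEquiv.append_conjList g g', ?_⟩
  simpa [conjList_conjList] using (BraidEquiv.append_conjList g' (conjList g'.prod⁻¹ g)).symm
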